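/- arXiv:2001.04420 — 2 statements merged into one kernel-verified Lean document; each statement's English description precedes it below -/
import Mathlib

section
/- Let n ≥ 1, dt > 0, and N ≥ 1. For each segment index k ∈ {0, …, N−1} let r_{k,0}, r_{k,1}, r_{k,2}, r_{k,3} ∈ ℝⁿ be control points, defining the cubic segment x_k(τ) = ∑_{j=0}^{3} (choose 3 j) · (1 − τ/dt)^{3−j} · (τ/dt)^{j} · r_{k,j} for τ ∈ [0, dt]. Let {(A_p, c_p)}_{p=0}^{P−1} be a finite family of polyhedra {x ∈ ℝⁿ : A_p x ≤ c_p}. Suppose that for every k there exists p such that A_p r_{k,j} ≤ c_p for all j ∈ {0,1,2,3}. Then every point of the spline trajectory lies in the union of the polyhedra: for all k ∈ {0, …, N−1} and all τ ∈ [0, dt], x_k(τ) ∈ ⋃_{p=0}^{P−1} {x : A_p x ≤ c_p}. -/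
/-- If for every segment of a cubic Bézier spline there is a polyhedron of the
family containing all four of its control points, then every point of the
spline lies in the union of the polyhedra. -/
theorem spline_mem_union_polyhedra (n : ℕ) (hn : 1 ≤ n)
    (dt : ℝ) (hdt : 0 < dt) (N : ℕ) (hN : 1 ≤ N)
    (r : Fin N → Fin 4 → Fin n → ℝ)
    (P : ℕ) (m : Fin P → ℕ)
    (A : ∀ p : Fin P, Matrix (Fin (m p)) (Fin n) ℝ)
    (c : ∀ p : Fin P, Fin (m p) → ℝ)
    (halloc : ∀ k : Fin N, ∃ p : Fin P, ∀ j : Fin 4,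
        (A p).mulVec (r k j) ≤ c p) :
    ∀ k : Fin N, ∀ τ ∈ Set.Icc (0 : ℝ) dt,
      (∑ j : Fin 4, ((Nat.choose 3 (j : ℕ) : ℝ) *
          (1 - τ / dt) ^ (3 - (j : ℕ)) * (τ / dt) ^ (j : ℕ)) • r k j)
        ∈ ⋃ p : Fin P, {x : Fin n → ℝ | (A p).mulVec x ≤ c p} := by
  intro k τ hτ
  obtain ⟨p, hp⟩ := halloc k
  set s := τ / dt with hs
  have hs0 : 0 ≤ s := div_nonneg hτ.1 hdt.le
  have hs1 : s ≤ 1 := (div_le_one hdt).mpr hτ.2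
  set w : Fin 4 → ℝ := fun j =>
    (Nat.choose 3 (j : ℕ) : ℝ) * (1 - s) ^ (3 - (j : ℕ)) * s ^ (j : ℕ) with hw
  have hwnn : ∀ j, 0 ≤ w j := fun j => by
    apply mul_nonneg (mul_nonneg (by positivity) (pow_nonneg (by linarith) _))
      (pow_nonneg hs0 _)
  have hwsum : ∑ j : Fin 4, w j = 1 := by
    simp only [hw, Fin.sum_univ_four, show ((0:Fin 4):ℕ) = 0 from rfl,
      show ((1:Fin 4):ℕ) = 1 from rfl, show ((2:Fin 4):ℕ) = 2 from rfl,
      show ((3:Fin 4):ℕ) = 3 from rfl]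
    norm_num
    ring
  refine Set.mem_iUnion.mpr ⟨p, ?_⟩
  intro i
  have hlin : (A p).mulVec (∑ j : Fin 4, w j • r k j) i
      = ∑ j : Fin 4, w j * (A p).mulVec (r k j) i := by
    have : (A p).mulVec (∑ j : Fin 4, w j • r k j)
        = ∑ j : Fin 4, w j • (A p).mulVec (r k j) := by
      rw [← Matrix.mulVecLin_apply, map_sum]
      simp [Matrix.mulVecLin_apply]
    rw [this]
    simp [Finset.sum_apply]
  show (A p).mulVec (∑ j : Fin 4, w j • r k j) i ≤ c p i
  rw [hlin]
  calc ∑ j : Fin 4, w j * (A p).mulVec (r k j) i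
      ≤ ∑ j : Fin 4, w j * c p i := by
        apply Finset.sum_le_sum
        intro j _
        exact mul_le_mul_of_nonneg_left (hp j i) (hwnn j)
    _ = c p i := by rw [← Finset.sum_mul, hwsum, one_mul]
end

section
/- Let x_R, x_H, v_R ∈ ℝ with x_H ≠ x_R, let a_max > 0, and suppose sign(v_R·(x_H − x_R)) · v_R²/(2·a_max) < |x_H − x_R|, where sign(s) is 1 for s > 0, 0 for s = 0 and −1 for s < 0. Then there exist T ≥ 0 and a twice-differentiable function x : ℝ → ℝ such that x(0) = x_R, x′(0) = v_R, x′(T) = 0, |x″(t)| ≤ a_max for all t ∈ [0, T], and x(t) ≠ x_H for all t ∈ [0, T]; i.e., a braking maneuver with acceleration bounded by a_max exists that brings the vehicle to rest without ever reaching x_H. -/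
/-!
Brake at full deceleration `a_max` against the direction of motion. The vehicle stops after time
`|v_R| / a_max` and sweeps exactly the segment from `x_R` to `x_R + sign(v_R) · v_R² / (2 a_max)`.
The hypothesis says that `x_H` is not on this segment: either it lies on the other side of `x_R`
(or `v_R = 0`), or it lies ahead at a distance exceeding the stopping distance.
-/

namespace Real

lemma sign_mul_abs (r : ℝ) : sign r * |r| = r := by
  rcases lt_trichotomy r 0 with h | rfl | h
  · rw [sign_of_neg h, abs_of_neg h]; ring
  · simp
  · rw [sign_of_pos h, abs_of_pos h, one_mul]

lemma abs_sign_le_one (r : ℝ) : |sign r| ≤ 1 := by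
  rcases sign_apply_eq r with h | h | h <;> simp [h]

end Real

noncomputable def brakingPath (x₀ v a t : ℝ) : ℝ :=
  x₀ + Real.sign v * (|v| * t - a * t ^ 2 / 2)

section brakingPath

variable (x₀ v a : ℝ)

lemma hasDerivAt_brakingPath (t : ℝ) :
    HasDerivAt (brakingPath x₀ v a) (Real.sign v * (|v| - a * t)) t := by
  have h : HasDerivAt (fun t => |v| * t - a * t ^ 2 / 2) (|v| * 1 - a * (2 * t ^ 1) / 2) t :=
    ((hasDerivAt_id t).const_mul |v|).sub (((hasDerivAt_pow 2 t).const_mul a).div_const 2)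
  have h' : HasDerivAt (brakingPath x₀ v a) (Real.sign v * (|v| * 1 - a * (2 * t ^ 1) / 2)) t :=
    (h.const_mul (Real.sign v)).const_add x₀
  convert h' using 1
  ring

lemma deriv_brakingPath :
    deriv (brakingPath x₀ v a) = fun t => Real.sign v * (|v| - a * t) :=
  funext fun t => (hasDerivAt_brakingPath x₀ v a t).deriv

lemma hasDerivAt_deriv_brakingPath (t : ℝ) :
    HasDerivAt (deriv (brakingPath x₀ v a)) (-(Real.sign v * a)) t := by
  have h : HasDerivAt (fun t => |v| - a * t) (-(a * 1)) t :=
    ((hasDerivAt_id t).const_mul a).const_sub |v|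
  have h' : HasDerivAt (fun t => Real.sign v * (|v| - a * t)) (Real.sign v * -(a * 1)) t :=
    h.const_mul (Real.sign v)
  rw [deriv_brakingPath]
  convert h' using 1
  ring

lemma deriv_brakingPath_stop (ha : a ≠ 0) : deriv (brakingPath x₀ v a) (|v| / a) = 0 := by
  simp [deriv_brakingPath, mul_div_cancel₀ _ ha]

end brakingPath

lemma braking_distance_mem_Icc {s a t : ℝ} (ha : 0 < a) (ht : t ∈ Set.Icc 0 (s / a)) :
    s * t - a * t ^ 2 / 2 ∈ Set.Icc 0 (s ^ 2 / (2 * a)) := by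
  obtain ⟨ht₀, ht₁⟩ := ht
  have hat : a * t ≤ s := (le_div_iff₀' ha).mp ht₁
  constructor
  · nlinarith
  · rw [le_div_iff₀ (by positivity)]
    nlinarith [sq_nonneg (s - a * t)]

lemma sign_mul_ne_of_sign_mul_lt {v d D S : ℝ} (hd : d ≠ 0) (hD₀ : 0 ≤ D) (hDS : D ≤ S)
    (h : Real.sign (v * d) * S < |d|) : Real.sign v * D ≠ d := by
  rintro rfl
  have hD : 0 < D := hD₀.lt_of_ne (by rintro rfl; simp at hd)
  rcases lt_trichotomy v 0 with hv | rfl | hv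
  · rw [Real.sign_of_neg hv, Real.sign_of_pos (by nlinarith), abs_of_neg (by linarith)] at h
    linarith
  · simp at hd
  · rw [Real.sign_of_pos hv, one_mul] at hd h
    rw [Real.sign_of_pos (by positivity), abs_of_nonneg hD₀] at h
    linarith

/-- If sign(v_R (x_H − x_R)) · v_R²/(2 a_max) < |x_H − x_R|, then there exists
a braking maneuver with acceleration bounded by a_max that brings the vehicle
from (x_R, v_R) to rest without ever reaching x_H. -/
theorem braking_maneuver_exists (x_R x_H v_R a_max : ℝ)
    (hne : x_H ≠ x_R) (ha : 0 < a_max)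
    (hstop : Real.sign (v_R * (x_H - x_R)) * (v_R ^ 2 / (2 * a_max))
        < |x_H - x_R|) :
    ∃ (T : ℝ) (x : ℝ → ℝ), 0 ≤ T ∧
      Differentiable ℝ x ∧ Differentiable ℝ (deriv x) ∧
      x 0 = x_R ∧ deriv x 0 = v_R ∧ deriv x T = 0 ∧
      (∀ t ∈ Set.Icc 0 T, |deriv (deriv x) t| ≤ a_max) ∧
      ∀ t ∈ Set.Icc 0 T, x t ≠ x_H := by
  refine ⟨|v_R| / a_max, brakingPath x_R v_R a_max, div_nonneg (abs_nonneg v_R) ha.le,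
    fun t => (hasDerivAt_brakingPath x_R v_R a_max t).differentiableAt,
    fun t => (hasDerivAt_deriv_brakingPath x_R v_R a_max t).differentiableAt,
    by simp [brakingPath], by simp [deriv_brakingPath, Real.sign_mul_abs],
    deriv_brakingPath_stop x_R v_R a_max ha.ne', fun t _ => ?_, fun t ht hx => ?_⟩
  · rw [(hasDerivAt_deriv_brakingPath x_R v_R a_max t).deriv, abs_neg, abs_mul, abs_of_pos ha]
    exact mul_le_of_le_one_left ha.le (Real.abs_sign_le_one v_R)
  · obtain ⟨hD₀, hDS⟩ := braking_distance_mem_Icc ha ht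
    rw [sq_abs] at hDS
    refine sign_mul_ne_of_sign_mul_lt (sub_ne_zero.mpr hne) hD₀ hDS hstop ?_
    rw [← hx, brakingPath]
    ring
end
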